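/- Let P, Q, R, S ∈ B_A(H) (operators admitting A-adjoints). Then ω_𝔸([[P,Q],[R,S]]) ≤ (1/2)(‖P‖_A + ‖S‖_A + ‖PP^{♯_A} + QQ^{♯_A}‖_A^{1/2} + ‖RR^{♯_A} + SS^{♯_A}‖_A^{1/2}). -/

import Mathlib

open ContinuousLinearMap

/-- The `A`-seminorm of a vector: `‖x‖_A = √⟨Ax, x⟩`. -/
noncomputable def vnormA {H : Type*} [NormedAddCommGroup H] [InnerProductSpace ℂ H]
    (A : H →L[ℂ] H) (x : H) : ℝ :=
  Real.sqrt (RCLike.re (inner ℂ (A x) x : ℂ))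

/-- `T` is `A`-bounded, i.e. `T ∈ B_{A^{1/2}}(H)`. -/
def ABounded {H : Type*} [NormedAddCommGroup H] [InnerProductSpace ℂ H]
    (A T : H →L[ℂ] H) : Prop :=
  ∃ c : ℝ, 0 < c ∧ ∀ x, vnormA A (T x) ≤ c * vnormA A x

/-- The `A`-operator seminorm `‖T‖_A = sup{‖Tx‖_A : ‖x‖_A = 1}`. -/
noncomputable def opNormA {H : Type*} [NormedAddCommGroup H] [InnerProductSpace ℂ H]
    (A T : H →L[ℂ] H) : ℝ :=
  sSup {c : ℝ | ∃ x : H, vnormA A x = 1 ∧ c = vnormA A (T x)}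

/-- The `A`-numerical radius `ω_A(T) = sup{|⟨ATx, x⟩| : ‖x‖_A = 1}`. -/
noncomputable def wA {H : Type*} [NormedAddCommGroup H] [InnerProductSpace ℂ H]
    (A T : H →L[ℂ] H) : ℝ :=
  sSup {c : ℝ | ∃ x : H, vnormA A x = 1 ∧ c = ‖(inner ℂ (A (T x)) x : ℂ)‖}

/-- `Ts` is the reduced (Douglas) solution of `AX = T*A`, i.e. `Ts = T^{♯_A}`. -/
def IsReducedAdjoint {H : Type*} [NormedAddCommGroup H] [InnerProductSpace ℂ H]
    [CompleteSpace H] (A T Ts : H →L[ℂ] H) : Prop :=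
  A ∘L Ts = (ContinuousLinearMap.adjoint T) ∘L A ∧
    ∀ y, Ts y ∈ closure (Set.range A)

/-- The `2 × 2` operator matrix `[[P, Q], [R, S]]` acting on `H ⊕ H` (with the `ℓ²` product
inner product). -/
noncomputable def blk {H : Type*} [NormedAddCommGroup H] [InnerProductSpace ℂ H]
    (P Q R S : H →L[ℂ] H) : WithLp 2 (H × H) →L[ℂ] WithLp 2 (H × H) :=
  letI e := (WithLp.prodContinuousLinearEquiv 2 ℂ H H)
  (e.symm.toContinuousLinearMap) ∘L
    ((P.comp (fst ℂ H H) + Q.comp (snd ℂ H H)).prod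
      (R.comp (fst ℂ H H) + S.comp (snd ℂ H H))) ∘L
    (e.toContinuousLinearMap)

/-- `𝔸 = diag(A, A)` on `H ⊕ H`. -/
noncomputable def AA {H : Type*} [NormedAddCommGroup H] [InnerProductSpace ℂ H]
    (A : H →L[ℂ] H) : WithLp 2 (H × H) →L[ℂ] WithLp 2 (H × H) :=
  blk A 0 0 A

/-!
Writing `⟪A x, y⟫ = ⟪√A x, √A y⟫` gives Cauchy–Schwarz for `‖·‖_A`. An operator `T` with an
`A`-adjoint `Ts` is `A`-bounded, since `‖T x‖_A² = ⟪A x, Ts T x⟫` and `Ts T` is `A`-selfadjoint;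
for `A`-selfadjoint `M`, Reid's inequality `‖M x‖_A ≤ ‖M‖ ‖x‖_A` follows by iterating
`‖M x‖_A² ≤ ‖M² x‖_A ‖x‖_A` along the powers `M ^ 2 ^ n`.

For an `𝔸`-unit vector `(x, y)`, `⟪𝔸 [[P, Q], [R, S]] (x, y), (x, y)⟫` is the sum of two rows.
In the first, with `a = ‖x‖_A`, `b = ‖y‖_A`, one has `|⟪A P x, x⟫| ≤ min (‖P‖_A a², a ‖P♯x‖_A)`,
`|⟪A Q y, x⟫| ≤ b ‖Q♯x‖_A` and `‖P♯x‖_A² + ‖Q♯x‖_A² = ⟪A x, (PP♯ + QQ♯) x⟫ ≤ ‖PP♯ + QQ♯‖_A a²`.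
Bounding the resulting quadratic form in `(a, b)` by its largest eigenvalue gives
`(‖P‖_A + ‖PP♯ + QQ♯‖_A ^ (1/2)) / 2` for the first row, and symmetrically for the second.
-/

open scoped InnerProductSpace

section SemiHilbert

variable {H : Type*} [NormedAddCommGroup H] [InnerProductSpace ℂ H]

lemma vnormA_nonneg (A : H →L[ℂ] H) (x : H) : 0 ≤ vnormA A x := Real.sqrt_nonneg _

lemma vnormA_smul (A : H →L[ℂ] H) (c : ℂ) (x : H) : vnormA A (c • x) = ‖c‖ * vnormA A x := by
  rw [vnormA, vnormA, map_smul, inner_smul_left, inner_smul_right, ← mul_assoc,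
    RCLike.conj_mul, ← RCLike.ofReal_pow, RCLike.re_ofReal_mul, Real.sqrt_mul (by positivity),
    Real.sqrt_sq (norm_nonneg c)]

lemma vnormA_sq {A : H →L[ℂ] H} (hA : A.IsPositive) (x : H) :
    vnormA A x ^ 2 = RCLike.re ⟪A x, x⟫_ℂ :=
  Real.sq_sqrt (hA.re_inner_nonneg_left x)

lemma opNormA_nonneg (A T : H →L[ℂ] H) : 0 ≤ opNormA A T :=
  Real.sSup_nonneg (by rintro c ⟨x, -, rfl⟩; exact vnormA_nonneg A _)

lemma vnormA_apply_le_mul_of_forall (A T : H →L[ℂ] H) {c : ℝ}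
    (h₁ : ∀ x, vnormA A x = 1 → vnormA A (T x) ≤ c)
    (h₀ : ∀ x, vnormA A x = 0 → vnormA A (T x) = 0) (x : H) :
    vnormA A (T x) ≤ c * vnormA A x := by
  rcases (vnormA_nonneg A x).eq_or_lt with hx | hx
  · rw [← hx, h₀ x hx.symm, mul_zero]
  · have hunit : vnormA A ((vnormA A x : ℂ)⁻¹ • x) = 1 := by
      rw [vnormA_smul, norm_inv, Complex.norm_real, Real.norm_of_nonneg hx.le,
        inv_mul_cancel₀ hx.ne']
    have := h₁ _ hunit
    rwa [map_smul, vnormA_smul, norm_inv, Complex.norm_real, Real.norm_of_nonneg hx.le,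
      inv_mul_le_iff₀ hx, mul_comm] at this

lemma vnormA_le_opNormA_mul {A T : H →L[ℂ] H} (hT : ABounded A T) (x : H) :
    vnormA A (T x) ≤ opNormA A T * vnormA A x := by
  obtain ⟨c, -, hc⟩ := hT
  have hbdd : BddAbove {r | ∃ x, vnormA A x = 1 ∧ r = vnormA A (T x)} := by
    refine ⟨c, ?_⟩
    rintro _ ⟨z, hz, rfl⟩
    simpa [hz] using hc z
  exact vnormA_apply_le_mul_of_forall A T (fun y hy => le_csSup hbdd ⟨y, hy, rfl⟩)
    (fun y hy => le_antisymm (by simpa [hy] using hc y) (vnormA_nonneg A _)) x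

section Positive

variable [CompleteSpace H] {A : H →L[ℂ] H}

lemma inner_map_eq_inner_sqrt (hA : A.IsPositive) (x y : H) :
    ⟪A x, y⟫_ℂ = ⟪CFC.sqrt A x, CFC.sqrt A y⟫_ℂ := by
  have hsa : IsSelfAdjoint (CFC.sqrt A) := IsSelfAdjoint.of_nonneg (CFC.sqrt_nonneg A)
  conv_lhs => rw [← CFC.sqrt_mul_sqrt_self A ((nonneg_iff_isPositive A).2 hA)]
  rw [mul_apply_eq_comp, ← adjoint_inner_right, hsa.adjoint_eq]

lemma vnormA_eq_norm_sqrt (hA : A.IsPositive) (x : H) : vnormA A x = ‖CFC.sqrt A x‖ := by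
  rw [vnormA, inner_map_eq_inner_sqrt hA, inner_self_eq_norm_sq, Real.sqrt_sq (norm_nonneg _)]

lemma norm_inner_map_le (hA : A.IsPositive) (x y : H) :
    ‖⟪A x, y⟫_ℂ‖ ≤ vnormA A x * vnormA A y := by
  rw [inner_map_eq_inner_sqrt hA, vnormA_eq_norm_sqrt hA, vnormA_eq_norm_sqrt hA]
  exact norm_inner_le_norm _ _

lemma vnormA_le_norm_sqrt_mul (hA : A.IsPositive) (x : H) :
    vnormA A x ≤ ‖CFC.sqrt A‖ * ‖x‖ := by
  rw [vnormA_eq_norm_sqrt hA]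
  exact le_opNorm _ _

end Positive

/-- `IsAAdjoint A M M` expresses that `M` is `A`-selfadjoint. -/
def IsAAdjoint [CompleteSpace H] (A T Ts : H →L[ℂ] H) : Prop :=
  A ∘L Ts = adjoint T ∘L A

namespace IsAAdjoint

variable [CompleteSpace H] {A T Ts U Us M : H →L[ℂ] H}

lemma inner_map_apply (h : IsAAdjoint A T Ts) (x y : H) :
    ⟪A (Ts x), y⟫_ℂ = ⟪A x, T y⟫_ℂ := by
  rw [← comp_apply, h, comp_apply, adjoint_inner_left]

lemma symm (hA : IsSelfAdjoint A) (h : IsAAdjoint A T Ts) : IsAAdjoint A Ts T := by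
  have := congrArg adjoint h
  rw [adjoint_comp, adjoint_comp, adjoint_adjoint, hA.adjoint_eq] at this
  exact this.symm

lemma comp (hT : IsAAdjoint A T Ts) (hU : IsAAdjoint A U Us) :
    IsAAdjoint A (T ∘L U) (Us ∘L Ts) := by
  rw [IsAAdjoint, adjoint_comp, ← comp_assoc, hU, comp_assoc, hT, comp_assoc]

lemma add (hT : IsAAdjoint A T Ts) (hU : IsAAdjoint A U Us) :
    IsAAdjoint A (T + U) (Ts + Us) := by
  rw [IsAAdjoint, comp_add, map_add, add_comp, hT, hU]

lemma pow (hM : IsAAdjoint A M M) (n : ℕ) : IsAAdjoint A (M ^ n) (M ^ n) := by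
  induction n with
  | zero => rw [IsAAdjoint, pow_zero, ← star_eq_adjoint, star_one]; rfl
  | succ n ih =>
    have := hM.comp ih
    rwa [← mul_def, ← mul_def, ← pow_succ', ← pow_succ] at this

end IsAAdjoint

lemma le_of_forall_pow_two_pow_le_mul {t L K : ℝ} (hL : 0 ≤ L)
    (h : ∀ n : ℕ, t ^ 2 ^ n ≤ K * L ^ 2 ^ n) : t ≤ L := by
  by_contra! hLt
  have ht : 0 < t := hL.trans_lt hLt
  have hlim : Filter.Tendsto (fun n : ℕ => K * (L / t) ^ 2 ^ n) Filter.atTop (nhds 0) := by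
    simpa using ((tendsto_pow_atTop_nhds_zero_of_lt_one (div_nonneg hL ht.le)
      ((div_lt_one ht).2 hLt)).comp (tendsto_pow_atTop_atTop_of_one_lt one_lt_two)).const_mul K
  have hone : ∀ n : ℕ, 1 ≤ K * (L / t) ^ 2 ^ n := fun n => by
    rw [div_pow, mul_div_assoc', le_div_iff₀ (by positivity), one_mul]
    exact h n
  exact absurd (ge_of_tendsto' hlim hone) (by norm_num)

section Reid

variable [CompleteSpace H] {A M : H →L[ℂ] H}

lemma vnormA_apply_sq_le (hA : A.IsPositive) (hM : IsAAdjoint A M M) (x : H) :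
    vnormA A (M x) ^ 2 ≤ vnormA A (M (M x)) * vnormA A x := by
  calc vnormA A (M x) ^ 2 = RCLike.re ⟪A (M x), M x⟫_ℂ := vnormA_sq hA _
    _ = RCLike.re ⟪A x, M (M x)⟫_ℂ := by rw [hM.inner_map_apply]
    _ ≤ ‖⟪A x, M (M x)⟫_ℂ‖ := RCLike.re_le_norm _
    _ ≤ vnormA A x * vnormA A (M (M x)) := norm_inner_map_le hA _ _
    _ = _ := mul_comm _ _

lemma vnormA_apply_pow_two_pow_le (hA : A.IsPositive) (hM : IsAAdjoint A M M) {x : H}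
    (hx : vnormA A x = 1) (n : ℕ) : vnormA A (M x) ^ 2 ^ n ≤ vnormA A ((M ^ 2 ^ n) x) := by
  induction n with
  | zero => simp
  | succ n ih =>
    have hstep := vnormA_apply_sq_le hA (hM.pow (2 ^ n)) x
    rw [hx, mul_one, ← mul_apply_eq_comp, ← pow_add, ← two_mul, ← pow_succ'] at hstep
    calc vnormA A (M x) ^ 2 ^ (n + 1) = (vnormA A (M x) ^ 2 ^ n) ^ 2 := by
          rw [pow_succ, pow_mul]
      _ ≤ vnormA A ((M ^ 2 ^ n) x) ^ 2 :=
          pow_le_pow_left₀ (pow_nonneg (vnormA_nonneg A _) _) ih 2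
      _ ≤ _ := hstep

lemma vnormA_apply_le_norm_mul (hA : A.IsPositive) (hM : IsAAdjoint A M M) (x : H) :
    vnormA A (M x) ≤ ‖M‖ * vnormA A x := by
  refine vnormA_apply_le_mul_of_forall A M (fun y hy => ?_) (fun y hy => ?_) x
  · refine le_of_forall_pow_two_pow_le_mul (K := ‖CFC.sqrt A‖ * ‖y‖) (norm_nonneg M) fun n => ?_
    calc vnormA A (M y) ^ 2 ^ n ≤ vnormA A ((M ^ 2 ^ n) y) :=
          vnormA_apply_pow_two_pow_le hA hM hy n
      _ ≤ ‖CFC.sqrt A‖ * ‖(M ^ 2 ^ n) y‖ := vnormA_le_norm_sqrt_mul hA _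
      _ ≤ ‖CFC.sqrt A‖ * (‖M‖ ^ 2 ^ n * ‖y‖) := by
          gcongr
          exact (le_opNorm _ _).trans (by gcongr; exact norm_pow_le' M (by positivity))
      _ = _ := by ring
  · have := vnormA_apply_sq_le hA hM y
    rw [hy, mul_zero] at this
    exact pow_eq_zero_iff two_ne_zero |>.1 (le_antisymm this (sq_nonneg _))

end Reid

lemma IsAAdjoint.aBounded [CompleteSpace H] {A T Ts : H →L[ℂ] H} (hA : A.IsPositive)
    (h : IsAAdjoint A T Ts) : ABounded A T := by
  have h' : IsAAdjoint A Ts T := h.symm hA.isSelfAdjoint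
  refine ⟨√‖Ts ∘L T‖ + 1, by positivity, fun x => ?_⟩
  have hsq : vnormA A (T x) ^ 2 ≤ (√‖Ts ∘L T‖ * vnormA A x) ^ 2 := by
    calc vnormA A (T x) ^ 2 = RCLike.re ⟪A (T x), T x⟫_ℂ := vnormA_sq hA _
      _ = RCLike.re ⟪A x, (Ts ∘L T) x⟫_ℂ := by rw [h'.inner_map_apply]; rfl
      _ ≤ ‖⟪A x, (Ts ∘L T) x⟫_ℂ‖ := RCLike.re_le_norm _
      _ ≤ vnormA A x * vnormA A ((Ts ∘L T) x) := norm_inner_map_le hA _ _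
      _ ≤ vnormA A x * (‖Ts ∘L T‖ * vnormA A x) :=
          mul_le_mul_of_nonneg_left (vnormA_apply_le_norm_mul hA (h'.comp h) x)
            (vnormA_nonneg A x)
      _ = _ := by rw [mul_pow, Real.sq_sqrt (norm_nonneg _)]; ring
  calc vnormA A (T x) ≤ √‖Ts ∘L T‖ * vnormA A x :=
        (pow_le_pow_iff_left₀ (vnormA_nonneg A _)
          (mul_nonneg (Real.sqrt_nonneg _) (vnormA_nonneg A x)) two_ne_zero).1 hsq
    _ ≤ _ := mul_le_mul_of_nonneg_right (by linarith) (vnormA_nonneg A x)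

/-- `(c ± √(c ^ 2 + d ^ 2)) / 2` are the eigenvalues of `!![c, d / 2; d / 2, 0]`. -/
lemma two_mul_quadratic_form_le (a b c d : ℝ) :
    2 * (a ^ 2 * c + a * b * d) ≤ (a ^ 2 + b ^ 2) * (c + √(c ^ 2 + d ^ 2)) := by
  set s := √(c ^ 2 + d ^ 2)
  have hs : s ^ 2 = c ^ 2 + d ^ 2 := Real.sq_sqrt (by positivity)
  have hsq : ((a ^ 2 - b ^ 2) * c + 2 * a * b * d) ^ 2 ≤ ((a ^ 2 + b ^ 2) * s) ^ 2 := by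
    have : ((a ^ 2 + b ^ 2) * s) ^ 2 = ((a ^ 2 - b ^ 2) * c + 2 * a * b * d) ^ 2
        + ((a ^ 2 - b ^ 2) * d - 2 * a * b * c) ^ 2 := by
      rw [mul_pow, hs]; ring
    rw [this]
    exact le_add_of_nonneg_right (sq_nonneg _)
  have := abs_le_of_sq_le_sq' hsq (by positivity)
  linarith [this.2]

lemma two_mul_add_mul_le {a b C D e p N : ℝ} (ha : 0 ≤ a) (hC : 0 ≤ C) (hp : 0 ≤ p)
    (hCp : C ≤ p * a ^ 2) (hCe : C ≤ a * e)
    (hN : e ^ 2 + D ^ 2 ≤ N * a ^ 2) :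
    2 * (C + b * D) ≤ (a ^ 2 + b ^ 2) * (p + √N) := by
  rcases ha.eq_or_lt with rfl | ha
  · have hC0 : C = 0 := by nlinarith
    have hD0 : D = 0 := by nlinarith
    subst hC0 hD0
    nlinarith [Real.sqrt_nonneg N]
  set c := C / a ^ 2
  set d := D / a
  have hc : c ≤ p := (div_le_iff₀ (by positivity)).2 hCp
  have hce : c ≤ e / a := by
    rw [div_le_div_iff₀ (by positivity) ha]; nlinarith
  have hcd : c ^ 2 + d ^ 2 ≤ N :=
    calc c ^ 2 + d ^ 2 ≤ (e / a) ^ 2 + (D / a) ^ 2 := by gcongr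
      _ = (e ^ 2 + D ^ 2) / a ^ 2 := by ring
      _ ≤ N := (div_le_iff₀ (by positivity)).2 hN
  calc 2 * (C + b * D) = 2 * (a ^ 2 * c + a * b * d) := by
        simp only [c, d]; field_simp
    _ ≤ (a ^ 2 + b ^ 2) * (c + √(c ^ 2 + d ^ 2)) := two_mul_quadratic_form_le a b c d
    _ ≤ (a ^ 2 + b ^ 2) * (p + √N) := by gcongr

lemma IsAAdjoint.two_mul_norm_inner_map_add_le [CompleteSpace H] {A P Q Ps Qs : H →L[ℂ] H}
    (hA : A.IsPositive) (hP : IsAAdjoint A P Ps) (hQ : IsAAdjoint A Q Qs) (x y : H) :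
    2 * ‖⟪A (P x + Q y), x⟫_ℂ‖ ≤ (vnormA A x ^ 2 + vnormA A y ^ 2) *
      (opNormA A P + √(opNormA A (P ∘L Ps + Q ∘L Qs))) := by
  have hP' : IsAAdjoint A Ps P := hP.symm hA.isSelfAdjoint
  have hQ' : IsAAdjoint A Qs Q := hQ.symm hA.isSelfAdjoint
  have hPQ : IsAAdjoint A (P ∘L Ps + Q ∘L Qs) (P ∘L Ps + Q ∘L Qs) :=
    (hP.comp hP').add (hQ.comp hQ')
  have hsplit : ‖⟪A (P x + Q y), x⟫_ℂ‖ ≤ ‖⟪A (P x), x⟫_ℂ‖ + vnormA A y * vnormA A (Qs x) := by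
    rw [map_add, inner_add_left, hQ'.inner_map_apply]
    exact (norm_add_le _ _).trans (by gcongr; exact norm_inner_map_le hA _ _)
  have hCp : ‖⟪A (P x), x⟫_ℂ‖ ≤ opNormA A P * vnormA A x ^ 2 :=
    calc ‖⟪A (P x), x⟫_ℂ‖ ≤ vnormA A (P x) * vnormA A x := norm_inner_map_le hA _ _
      _ ≤ opNormA A P * vnormA A x * vnormA A x :=
          mul_le_mul_of_nonneg_right (vnormA_le_opNormA_mul (hP.aBounded hA) x)
            (vnormA_nonneg A x)
      _ = _ := by ring
  have hCe : ‖⟪A (P x), x⟫_ℂ‖ ≤ vnormA A x * vnormA A (Ps x) := by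
    rw [hP'.inner_map_apply]
    exact norm_inner_map_le hA _ _
  have hN : vnormA A (Ps x) ^ 2 + vnormA A (Qs x) ^ 2 ≤
      opNormA A (P ∘L Ps + Q ∘L Qs) * vnormA A x ^ 2 :=
    calc vnormA A (Ps x) ^ 2 + vnormA A (Qs x) ^ 2
        = RCLike.re ⟪A x, (P ∘L Ps + Q ∘L Qs) x⟫_ℂ := by
          rw [vnormA_sq hA, vnormA_sq hA, hP.inner_map_apply, hQ.inner_map_apply, ← map_add,
            ← inner_add_right]
          rfl
      _ ≤ ‖⟪A x, (P ∘L Ps + Q ∘L Qs) x⟫_ℂ‖ := RCLike.re_le_norm _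
      _ ≤ vnormA A x * (opNormA A (P ∘L Ps + Q ∘L Qs) * vnormA A x) :=
          (norm_inner_map_le hA _ _).trans (mul_le_mul_of_nonneg_left
            (vnormA_le_opNormA_mul (hPQ.aBounded hA) x) (vnormA_nonneg A x))
      _ = _ := by ring
  calc 2 * ‖⟪A (P x + Q y), x⟫_ℂ‖
      ≤ 2 * (‖⟪A (P x), x⟫_ℂ‖ + vnormA A y * vnormA A (Qs x)) := by gcongr
    _ ≤ _ := two_mul_add_mul_le (vnormA_nonneg A x) (norm_nonneg _) (opNormA_nonneg A P)
          hCp hCe hN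

section Block

variable (P Q R S : H →L[ℂ] H) (x : WithLp 2 (H × H))

@[simp]
lemma blk_apply_fst : (blk P Q R S x).fst = P x.fst + Q x.snd := rfl

@[simp]
lemma blk_apply_snd : (blk P Q R S x).snd = R x.fst + S x.snd := rfl

lemma inner_AA_apply (A : H →L[ℂ] H) (z y : WithLp 2 (H × H)) :
    ⟪AA A z, y⟫_ℂ = ⟪A z.fst, y.fst⟫_ℂ + ⟪A z.snd, y.snd⟫_ℂ := by
  simp only [AA, WithLp.prod_inner_apply, WithLp.ofLp_fst, WithLp.ofLp_snd, blk_apply_fst,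
    blk_apply_snd, zero_apply, add_zero, zero_add]

lemma vnormA_AA {A : H →L[ℂ] H} (hA : A.IsPositive) :
    vnormA (AA A) x = √(vnormA A x.fst ^ 2 + vnormA A x.snd ^ 2) := by
  rw [vnormA, inner_AA_apply, map_add, vnormA_sq hA, vnormA_sq hA]

end Block

end SemiHilbert

theorem stmt8 {H : Type*} [NormedAddCommGroup H] [InnerProductSpace ℂ H] [CompleteSpace H]
    (A : H →L[ℂ] H) (hA : A.IsPositive)
    (P Q R S Ps Qs Rs Ss : H →L[ℂ] H)
    (hP : IsReducedAdjoint A P Ps) (hQ : IsReducedAdjoint A Q Qs)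
    (hR : IsReducedAdjoint A R Rs) (hS : IsReducedAdjoint A S Ss) :
    wA (AA A) (blk P Q R S) ≤
      (1 / 2) * (opNormA A P + opNormA A S +
        Real.sqrt (opNormA A (P ∘L Ps + Q ∘L Qs)) +
        Real.sqrt (opNormA A (R ∘L Rs + S ∘L Ss))) := by
  have hbound_nonneg := add_nonneg (add_nonneg (add_nonneg (opNormA_nonneg A P)
    (opNormA_nonneg A S)) (Real.sqrt_nonneg (opNormA A (P ∘L Ps + Q ∘L Qs))))
    (Real.sqrt_nonneg (opNormA A (R ∘L Rs + S ∘L Ss)))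
  refine Real.sSup_le ?_ (mul_nonneg (by norm_num) hbound_nonneg)
  rintro _ ⟨x, hx, rfl⟩
  have hunit : vnormA A x.fst ^ 2 + vnormA A x.snd ^ 2 = 1 := by
    rwa [vnormA_AA x hA, Real.sqrt_eq_one] at hx
  have row₁ := IsAAdjoint.two_mul_norm_inner_map_add_le hA hP.1 hQ.1 x.fst x.snd
  have row₂ := IsAAdjoint.two_mul_norm_inner_map_add_le hA hS.1 hR.1 x.snd x.fst
  rw [add_comm (S _), add_comm (S ∘L Ss), add_comm (vnormA A _ ^ 2), hunit, one_mul] at row₂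
  rw [hunit, one_mul] at row₁
  rw [inner_AA_apply, blk_apply_fst, blk_apply_snd]
  linarith [norm_add_le ⟪A (P x.fst + Q x.snd), x.fst⟫_ℂ ⟪A (R x.fst + S x.snd), x.snd⟫_ℂ]
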